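/- arXiv:1710.00180 — 5 statements merged into one kernel-verified Lean document; each statement's English description precedes it below -/
import Mathlib

section
/- Let x, y be unit vectors in a complex Hilbert space K. For any unitary U on K with Ux = y and any scalar λ ∈ ℂ, one has ‖U - λI‖² ≥ 1 - |⟨x, y⟩|². -/
/-! Evaluating at `x` gives `‖U - λ I‖ ≥ ‖y - λ x‖`, and `‖y - λ x‖²` is at least the squared
distance `1 - |⟪x, y⟫|²` from `y` to the line `ℂ x`. -/

open scoped InnerProductSpace

section

variable {𝕜 E : Type*} [RCLike 𝕜] [NormedAddCommGroup E] [InnerProductSpace 𝕜 E]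

theorem norm_sub_smul_sq_eq {x : E} (hx : ‖x‖ = 1) (y : E) (a : 𝕜) :
    ‖y - a • x‖ ^ 2 = ‖y‖ ^ 2 - ‖⟪x, y⟫_𝕜‖ ^ 2 + ‖a - ⟪x, y⟫_𝕜‖ ^ 2 := by
  rw [@norm_sub_sq 𝕜, @norm_sub_sq 𝕜 𝕜, inner_smul_right, ← inner_conj_symm, norm_smul, hx]
  have hre : RCLike.re (a * starRingEnd 𝕜 ⟪x, y⟫_𝕜) = RCLike.re (⟪a, ⟪x, y⟫_𝕜⟫_𝕜) := by
    rw [RCLike.inner_apply, ← RCLike.conj_re, map_mul, RCLike.conj_conj, mul_comm]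
  rw [hre]
  ring

theorem norm_sq_sub_norm_inner_sq_le {x : E} (hx : ‖x‖ = 1) (y : E) (a : 𝕜) :
    ‖y‖ ^ 2 - ‖⟪x, y⟫_𝕜‖ ^ 2 ≤ ‖y - a • x‖ ^ 2 := by
  rw [norm_sub_smul_sq_eq hx]
  linarith [sq_nonneg ‖a - ⟪x, y⟫_𝕜‖]

end

theorem stmt0_general {K : Type*} [NormedAddCommGroup K] [InnerProductSpace ℂ K]
    (x y : K) (hx : ‖x‖ = 1) (hy : ‖y‖ = 1)
    (U : K →L[ℂ] K) (hUx : U x = y) (lam : ℂ) :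
    1 - ‖⟪x, y⟫_ℂ‖ ^ 2 ≤ ‖U - lam • (1 : K →L[ℂ] K)‖ ^ 2 :=
  calc 1 - ‖⟪x, y⟫_ℂ‖ ^ 2 ≤ ‖y - lam • x‖ ^ 2 := by
        simpa [hy] using norm_sq_sub_norm_inner_sq_le hx y lam
    _ = ‖(U - lam • (1 : K →L[ℂ] K)) x‖ ^ 2 := by simp [hUx]
    _ ≤ ‖U - lam • (1 : K →L[ℂ] K)‖ ^ 2 := by
        gcongr
        exact (U - lam • 1).unit_le_opNorm x hx.le

theorem stmt0 {K : Type*} [NormedAddCommGroup K] [InnerProductSpace ℂ K] [CompleteSpace K]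
    (x y : K) (hx : ‖x‖ = 1) (hy : ‖y‖ = 1)
    (U : K →L[ℂ] K) (hU : U ∈ unitary (K →L[ℂ] K)) (hUx : U x = y) (lam : ℂ) :
    1 - ‖⟪x, y⟫_ℂ‖ ^ 2 ≤ ‖U - lam • (1 : K →L[ℂ] K)‖ ^ 2 :=
  stmt0_general x y hx hy U hUx lam
end

section
/- Let x, y be unit vectors in a complex Hilbert space K of dimension at least 2 (or any Hilbert space). Then there exists a unitary U on K with Ux = y such that the distance from U to the scalar operators ℂI equals √(1 - |⟨x, y⟩|²); i.e., the infimum inf{ d(U, ℂI) : U unitary, Ux = y } is attained and equals √(1 - |⟨x, y⟩|²). -/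
/-!
The lower bound holds for any operator `V` with `V x = y`: `‖V - a • 1‖ ≥ ‖y - a x‖`, which is at
least the distance `√(1 - |⟪x, y⟫|²)` from `y` to the line `ℂ x`. For the upper bound, multiply
`y` by a phase so that `r = ⟪x, y⟫` is real and nonnegative, write `y = r x + s u` with `u ⊥ x`
a unit vector and `s = √(1 - r²)`, and take `U` to be the rotation by the matrix `[[r, -s], [s, r]]`
on `span {x, u}` and the identity on its orthogonal complement. Since `U` is an isometry,
`‖U z - r z‖² = (1 + r²)‖z‖² - 2r Re⟪z, U z⟫`, and `Re⟪z, U z⟫ ≥ r‖z‖²` by Bessel's inequality,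
so `‖U - r • 1‖ ≤ s`.
-/

open scoped InnerProductSpace
open ContinuousLinearMap InnerProductSpace Metric

section

variable {K : Type*} [NormedAddCommGroup K] [InnerProductSpace ℂ K]

lemma inner_sub_inner_smul_self_eq_zero {x : K} (hx : ‖x‖ = 1) (y : K) :
    ⟪x, y - ⟪x, y⟫_ℂ • x⟫_ℂ = 0 := by
  rw [inner_sub_right, inner_smul_right, inner_self_eq_one_of_norm_eq_one hx, mul_one, sub_self]

lemma norm_sub_smul_sq {x : K} (hx : ‖x‖ = 1) (y : K) (a : ℂ) :
    ‖y - a • x‖ ^ 2 = ‖y - ⟪x, y⟫_ℂ • x‖ ^ 2 + ‖⟪x, y⟫_ℂ - a‖ ^ 2 := by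
  have hdecomp : y - a • x = (y - ⟪x, y⟫_ℂ • x) + (⟪x, y⟫_ℂ - a) • x := by module
  have horth : ⟪y - ⟪x, y⟫_ℂ • x, (⟪x, y⟫_ℂ - a) • x⟫_ℂ = 0 := by
    rw [inner_smul_right, inner_eq_zero_symm.mp (inner_sub_inner_smul_self_eq_zero hx y), mul_zero]
  rw [hdecomp, sq, norm_add_sq_eq_norm_sq_add_norm_sq_of_inner_eq_zero _ _ horth, norm_smul, hx]
  ring

lemma norm_sub_inner_smul_self_sq {x : K} (hx : ‖x‖ = 1) (y : K) :
    ‖y - ⟪x, y⟫_ℂ • x‖ ^ 2 = ‖y‖ ^ 2 - ‖⟪x, y⟫_ℂ‖ ^ 2 := by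
  rw [eq_sub_iff_add_eq]
  simpa using (norm_sub_smul_sq hx y 0).symm

noncomputable def planeRotation (e₁ e₂ : K) (c s : ℝ) : K →L[ℂ] K :=
  1 + ((c : ℂ) - 1) • (rankOne ℂ e₁ e₁ + rankOne ℂ e₂ e₂)
    + (s : ℂ) • (rankOne ℂ e₂ e₁ - rankOne ℂ e₁ e₂)

variable {e₁ e₂ : K} {c s : ℝ}

lemma planeRotation_apply (z : K) :
    planeRotation e₁ e₂ c s z = z + ((c : ℂ) - 1) • (⟪e₁, z⟫_ℂ • e₁ + ⟪e₂, z⟫_ℂ • e₂)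
      + (s : ℂ) • (⟪e₁, z⟫_ℂ • e₂ - ⟪e₂, z⟫_ℂ • e₁) := by
  simp [planeRotation]

lemma planeRotation_apply_left (he₁ : ‖e₁‖ = 1) (h₁₂ : ⟪e₁, e₂⟫_ℂ = 0) :
    planeRotation e₁ e₂ c s e₁ = (c : ℂ) • e₁ + (s : ℂ) • e₂ := by
  rw [planeRotation_apply, inner_self_eq_one_of_norm_eq_one he₁, inner_eq_zero_symm.mp h₁₂]
  module

lemma star_planeRotation [CompleteSpace K] :
    star (planeRotation e₁ e₂ c s) = planeRotation e₁ e₂ c (-s) := by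
  rw [star_eq_adjoint, eq_comm, eq_adjoint_iff]
  intro v z
  simp only [planeRotation_apply, inner_add_left, inner_add_right, inner_sub_left, inner_sub_right,
    inner_smul_left, inner_smul_right, inner_conj_symm, Complex.ofReal_neg, map_sub, map_neg,
    Complex.conj_ofReal, map_one]
  ring

lemma planeRotation_mul_planeRotation_neg (he₁ : ‖e₁‖ = 1) (he₂ : ‖e₂‖ = 1)
    (h₁₂ : ⟪e₁, e₂⟫_ℂ = 0) (hcs : c ^ 2 + s ^ 2 = 1) :
    planeRotation e₁ e₂ c s * planeRotation e₁ e₂ c (-s) = 1 := by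
  have h₂₁ := inner_eq_zero_symm.mp h₁₂
  have h₁₁ := inner_self_eq_one_of_norm_eq_one (𝕜 := ℂ) he₁
  have h₂₂ := inner_self_eq_one_of_norm_eq_one (𝕜 := ℂ) he₂
  have hcs' : (c : ℂ) ^ 2 + (s : ℂ) ^ 2 = 1 := by exact_mod_cast hcs
  ext z
  simp only [mul_apply_eq_comp, one_apply_eq_self, planeRotation_apply, inner_add_right,
    inner_sub_right, inner_smul_right, h₁₂, h₂₁, h₁₁, h₂₂]
  match_scalars
  · ring
  · linear_combination ⟪e₁, z⟫_ℂ * hcs'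
  · linear_combination ⟪e₂, z⟫_ℂ * hcs'

lemma planeRotation_mem_unitary [CompleteSpace K] (he₁ : ‖e₁‖ = 1) (he₂ : ‖e₂‖ = 1)
    (h₁₂ : ⟪e₁, e₂⟫_ℂ = 0) (hcs : c ^ 2 + s ^ 2 = 1) :
    planeRotation e₁ e₂ c s ∈ unitary (K →L[ℂ] K) := by
  refine Unitary.mem_iff.mpr ⟨?_, ?_⟩
  · simpa [star_planeRotation] using
      planeRotation_mul_planeRotation_neg (s := -s) he₁ he₂ h₁₂ (by rwa [neg_sq])
  · rw [star_planeRotation]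
    exact planeRotation_mul_planeRotation_neg he₁ he₂ h₁₂ hcs

lemma norm_inner_sq_add_norm_inner_sq_le (he₁ : ‖e₁‖ = 1) (he₂ : ‖e₂‖ = 1)
    (h₁₂ : ⟪e₁, e₂⟫_ℂ = 0) (z : K) :
    ‖⟪e₁, z⟫_ℂ‖ ^ 2 + ‖⟪e₂, z⟫_ℂ‖ ^ 2 ≤ ‖z‖ ^ 2 := by
  have h₂₁ := inner_eq_zero_symm.mp h₁₂
  have hon : Orthonormal ℂ ![e₁, e₂] := by
    rw [orthonormal_iff_ite]
    intro i j
    fin_cases i <;> fin_cases j <;> simp [he₁, he₂, h₁₂, h₂₁]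
  simpa [Fin.sum_univ_two] using hon.sum_inner_products_le z (s := Finset.univ)

lemma re_inner_planeRotation_apply (z : K) :
    RCLike.re ⟪z, planeRotation e₁ e₂ c s z⟫_ℂ
      = ‖z‖ ^ 2 - (1 - c) * (‖⟪e₁, z⟫_ℂ‖ ^ 2 + ‖⟪e₂, z⟫_ℂ‖ ^ 2) := by
  simp only [planeRotation_apply, inner_add_right, inner_sub_right, inner_smul_right,
    ← inner_conj_symm z e₁, ← inner_conj_symm z e₂, inner_self_eq_norm_sq_to_K]
  simp [-inner_conj_symm, Complex.mul_re, Complex.sq_norm, Complex.normSq_apply,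
    ← Complex.ofReal_pow]
  ring

lemma norm_sub_smul_one_le_of_re_inner_ge {U : K →L[ℂ] K} (hU : ∀ z, ‖U z‖ = ‖z‖) {r : ℝ}
    (hr : 0 ≤ r) (h : ∀ z, r * ‖z‖ ^ 2 ≤ RCLike.re ⟪z, U z⟫_ℂ) :
    ‖U - (r : ℂ) • 1‖ ≤ √(1 - r ^ 2) := by
  refine opNorm_le_bound _ (Real.sqrt_nonneg _) fun z => ?_
  have hsq : ‖U z - (r : ℂ) • z‖ ^ 2 ≤ (1 - r ^ 2) * ‖z‖ ^ 2 := by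
    have hexp : ‖U z - (r : ℂ) • z‖ ^ 2 = (1 + r ^ 2) * ‖z‖ ^ 2 - 2 * r * RCLike.re ⟪z, U z⟫_ℂ := by
      rw [norm_sub_sq (𝕜 := ℂ), hU, inner_smul_right, inner_re_symm z (U z), norm_smul]
      simp [abs_of_nonneg hr]
      ring
    nlinarith [h z]
  calc ‖(U - (r : ℂ) • 1) z‖ = ‖U z - (r : ℂ) • z‖ := by simp
    _ ≤ √((1 - r ^ 2) * ‖z‖ ^ 2) := Real.le_sqrt_of_sq_le hsq
    _ = √(1 - r ^ 2) * ‖z‖ := by rw [Real.sqrt_mul' _ (sq_nonneg _), Real.sqrt_sq (norm_nonneg z)]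

lemma exists_unitary_apply_eq_of_inner_eq_ofReal [CompleteSpace K] {x y : K} (hx : ‖x‖ = 1)
    (hy : ‖y‖ = 1) {r : ℝ} (hr : 0 ≤ r) (hxy : ⟪x, y⟫_ℂ = r) :
    ∃ U ∈ unitary (K →L[ℂ] K), U x = y ∧ ‖U - (r : ℂ) • 1‖ ≤ √(1 - r ^ 2) := by
  set w := y - (r : ℂ) • x with hw_def
  have hxw : ⟪x, w⟫_ℂ = 0 := by
    rw [hw_def, ← hxy]
    exact inner_sub_inner_smul_self_eq_zero hx y
  have hw : ‖w‖ ^ 2 = 1 - r ^ 2 := by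
    rw [hw_def, ← hxy, norm_sub_inner_smul_self_sq hx y, hy, hxy]
    simp
  by_cases hw0 : w = 0
  · have hr1 : r = 1 := by nlinarith [norm_eq_zero.mpr hw0]
    refine ⟨1, one_mem _, ?_, ?_⟩
    · rw [hw_def, hr1, sub_eq_zero] at hw0
      simpa using hw0.symm
    · simp [hr1]
  set u := ((‖w‖ : ℂ)⁻¹) • w
  have hw_pos : 0 < ‖w‖ := norm_pos_iff.mpr hw0
  have hu : ‖u‖ = 1 := by
    simp [u, norm_smul, hw_pos.ne']
  have hxu : ⟪x, u⟫_ℂ = 0 := by simp [u, hxw]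
  have hwu : (‖w‖ : ℂ) • u = w := by
    simp [u, smul_smul, hw_pos.ne']
  refine ⟨planeRotation x u r ‖w‖, planeRotation_mem_unitary hx hu hxu (by linarith), ?_, ?_⟩
  · rw [planeRotation_apply_left hx hxu, hwu, hw_def]
    abel
  · refine norm_sub_smul_one_le_of_re_inner_ge (norm_map_of_mem_unitary
      (planeRotation_mem_unitary hx hu hxu (by linarith))) hr fun z => ?_
    rw [re_inner_planeRotation_apply]
    nlinarith [norm_inner_sq_add_norm_inner_sq_le hx hu hxu z, sq_nonneg (1 - r), hw]

lemma exists_unitary_apply_eq_norm_sub_inner_smul_one_le [CompleteSpace K] {x y : K}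
    (hx : ‖x‖ = 1) (hy : ‖y‖ = 1) :
    ∃ U ∈ unitary (K →L[ℂ] K), U x = y ∧ ‖U - ⟪x, y⟫_ℂ • 1‖ ≤ √(1 - ‖⟪x, y⟫_ℂ‖ ^ 2) := by
  obtain ⟨ω, hω, hc⟩ : ∃ ω : ℂ, ‖ω‖ = 1 ∧ ⟪x, y⟫_ℂ = ω * ‖⟪x, y⟫_ℂ‖ :=
    ⟨_, Complex.norm_exp_ofReal_mul_I _, by rw [mul_comm, Complex.norm_mul_exp_arg_mul_I]⟩
  have hω0 : ω ≠ 0 := norm_ne_zero_iff.mp (by rw [hω]; exact one_ne_zero)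
  have hωu : ω ∈ unitary ℂ := by
    rw [Unitary.mem_iff, Complex.star_def, Complex.conj_mul', Complex.mul_conj', hω]
    simp
  obtain ⟨U, hU, hUx, hUnorm⟩ := exists_unitary_apply_eq_of_inner_eq_ofReal hx
    (y := ω⁻¹ • y) (by rw [norm_smul, norm_inv, hω, hy]; simp) (norm_nonneg ⟪x, y⟫_ℂ)
    (by rw [inner_smul_right, inv_mul_eq_iff_eq_mul₀ hω0]; exact hc)
  refine ⟨ω • U, Unitary.smul_mem_of_mem hωu hU, ?_, ?_⟩
  · rw [smul_apply, hUx, smul_inv_smul₀ hω0]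
  · calc ‖ω • U - ⟪x, y⟫_ℂ • 1‖ = ‖ω • (U - (‖⟪x, y⟫_ℂ‖ : ℂ) • 1)‖ := by
          rw [smul_sub, smul_smul, ← hc]
      _ ≤ √(1 - ‖⟪x, y⟫_ℂ‖ ^ 2) := by rwa [norm_smul, hω, one_mul]

lemma sqrt_one_sub_norm_inner_sq_le_infDist {x y : K} (hx : ‖x‖ = 1) (hy : ‖y‖ = 1)
    {V : K →L[ℂ] K} (hV : V x = y) :
    √(1 - ‖⟪x, y⟫_ℂ‖ ^ 2) ≤ infDist V (Set.range fun a : ℂ => a • (1 : K →L[ℂ] K)) := by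
  refine (le_infDist (Set.range_nonempty _)).mpr ?_
  rintro _ ⟨a, rfl⟩
  calc √(1 - ‖⟪x, y⟫_ℂ‖ ^ 2) ≤ ‖y - a • x‖ := by
        refine Real.sqrt_le_iff.mpr ⟨norm_nonneg _, ?_⟩
        rw [norm_sub_smul_sq hx, norm_sub_inner_smul_self_sq hx, hy]
        nlinarith [sq_nonneg ‖⟪x, y⟫_ℂ - a‖]
    _ = ‖(V - a • 1) x‖ := by simp [hV]
    _ ≤ ‖V - a • 1‖ := (V - a • 1).unit_le_opNorm x hx.le
    _ = dist V (a • 1) := (dist_eq_norm _ _).symm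

end

theorem stmt1 {K : Type*} [NormedAddCommGroup K] [InnerProductSpace ℂ K] [CompleteSpace K]
    (x y : K) (hx : ‖x‖ = 1) (hy : ‖y‖ = 1) :
    ∃ U ∈ unitary (K →L[ℂ] K), U x = y ∧
      Metric.infDist U (Set.range fun lam : ℂ => lam • (1 : K →L[ℂ] K))
        = Real.sqrt (1 - ‖⟪x, y⟫_ℂ‖ ^ 2) ∧
      ∀ V ∈ unitary (K →L[ℂ] K), V x = y →
        Real.sqrt (1 - ‖⟪x, y⟫_ℂ‖ ^ 2)
          ≤ Metric.infDist V (Set.range fun lam : ℂ => lam • (1 : K →L[ℂ] K)) := by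
  obtain ⟨U, hU, hUx, hUnorm⟩ := exists_unitary_apply_eq_norm_sub_inner_smul_one_le hx hy
  refine ⟨U, hU, hUx, le_antisymm ?_ (sqrt_one_sub_norm_inner_sq_le_infDist hx hy hUx),
    fun V _ hV => sqrt_one_sub_norm_inner_sq_le_infDist hx hy hV⟩
  calc infDist U (Set.range fun lam : ℂ => lam • (1 : K →L[ℂ] K))
      ≤ dist U (⟪x, y⟫_ℂ • 1) := infDist_le_dist_of_mem (Set.mem_range_self _)
    _ = ‖U - ⟪x, y⟫_ℂ • 1‖ := dist_eq_norm _ _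
    _ ≤ _ := hUnorm
end

section
/- Let W be a unitary on a Hilbert space K and let x, y be unit vectors with Wx = y. Let P be a positive (self-adjoint, nonnegative) operator on K. Then ‖W - P‖ ≥ √(1 - (Re⟨x, y⟩)²). -/
/-!
Let `λ` be a point of the spectrum of `W` with minimal real part. Since `W` is normal, its
numerical range lies in the convex hull of its spectrum, so `Re λ ≤ Re ⟪x, W x⟫ = Re ⟪x, y⟫`.
As `|λ| = 1` and the spectrum of `P` lies in `[0, ∞)`, `λ` has distance at least
`√(1 - Re⟪x, y⟫²)` from the spectrum of `P`. For normal `P` this distance is `‖(λ - P)⁻¹‖⁻¹`, so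
if `‖W - P‖` were smaller, `λ - W` would be invertible as a small perturbation of `λ - P`.
-/

open scoped InnerProductSpace ComplexStarModule ComplexOrder

theorem Complex.sqrt_one_sub_sq_le_norm_sub {l z : ℂ} {c : ℝ} (hl : ‖l‖ = 1) (hlc : l.re ≤ c)
    (hz : 0 ≤ z) : √(1 - c ^ 2) ≤ ‖l - z‖ := by
  obtain ⟨hz_re, hz_im⟩ := Complex.nonneg_iff.mp hz
  have hl2 : l.re ^ 2 + l.im ^ 2 = 1 := by
    rw [sq, sq, ← Complex.normSq_apply, ← Complex.sq_norm, hl, one_pow]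
  rw [Complex.norm_def]
  refine Real.sqrt_le_sqrt ?_
  rw [Complex.normSq_apply, Complex.sub_re, Complex.sub_im, ← hz_im]
  rcases le_or_gt l.re 0 with hre | hre
  · nlinarith [sq_nonneg c, mul_nonneg (neg_nonneg.mpr hre) hz_re]
  · nlinarith [sq_nonneg (l.re - z.re)]

theorem spectrum.notMem_of_norm_sub_lt {A : Type*} [CStarAlgebra A] {a b : A} [IsStarNormal a]
    {l : ℂ} {s : ℝ} (hs : ∀ z ∈ spectrum ℂ a, s ≤ ‖l - z‖) (hba : ‖b - a‖ < s) :
    l ∉ spectrum ℂ b := by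
  nontriviality A
  have hs_pos : 0 < s := (norm_nonneg _).trans_lt hba
  have hne : ∀ z ∈ spectrum ℂ a, l - z ≠ 0 := fun z hz h =>
    hs_pos.not_ge (by simpa [h] using hs z hz)
  set u := cfcUnits (fun z => l - z) a hne
  have hu : (u : A) = algebraMap ℂ A l - a := by
    simp [u, cfc_sub (fun _ => l) (fun z => z) a, cfc_const l a, cfc_id' ℂ a]
  have hu_inv : ‖(↑u⁻¹ : A)‖ ≤ s⁻¹ :=
    norm_cfc_le (by positivity) fun z hz => by
      rw [norm_inv]; exact inv_anti₀ hs_pos (hs z hz)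
  have hnear : ‖(algebraMap ℂ A l - b) - u‖ < ‖(↑u⁻¹ : A)‖⁻¹ := by
    rw [hu, sub_sub_sub_cancel_left, norm_sub_rev]
    exact hba.trans_le ((le_inv_comm₀ hs_pos (norm_pos_iff.mpr u⁻¹.ne_zero)).mpr hu_inv)
  exact spectrum.notMem_iff.mpr (u.ofNearby _ hnear).isUnit

theorem ContinuousLinearMap.re_inner_realPart_apply {K : Type*} [NormedAddCommGroup K]
    [InnerProductSpace ℂ K] [CompleteSpace K] (T : K →L[ℂ] K) (x : K) :
    (⟪x, (ℜ T : K →L[ℂ] K) x⟫_ℂ).re = (⟪x, T x⟫_ℂ).re := by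
  have h : (⟪T x, x⟫_ℂ).re = (⟪x, T x⟫_ℂ).re := inner_re_symm (𝕜 := ℂ) _ _
  simp [realPart_apply_coe, star_eq_adjoint, adjoint_inner_right, h, ← mul_add, ← two_mul]

theorem ContinuousLinearMap.exists_mem_spectrum_re_le_re_inner {K : Type*} [NormedAddCommGroup K]
    [InnerProductSpace ℂ K] [CompleteSpace K] (T : K →L[ℂ] K) [IsStarNormal T] {x : K}
    (hx : ‖x‖ = 1) : ∃ l ∈ spectrum ℂ T, l.re ≤ (⟪x, T x⟫_ℂ).re := by
  have : Nontrivial K := ⟨x, 0, ne_zero_of_norm_ne_zero (by simp [hx])⟩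
  obtain ⟨l, hl, hmin⟩ := (spectrum.isCompact T).exists_isMinOn (spectrum.nonempty T)
    Complex.continuous_re.continuousOn
  refine ⟨l, hl, ?_⟩
  have hle : algebraMap ℝ (K →L[ℂ] K) l.re ≤ (ℜ T : K →L[ℂ] K) := by
    rw [algebraMap_le_iff_le_spectrum (ha := (ℜ T).2), spectrum_realPart' T]
    rintro _ ⟨z, hz, rfl⟩
    exact hmin hz
  have hpos := ((le_def _ _).mp hle).re_inner_nonneg_right x
  simpa [inner_sub_right, re_inner_realPart_apply, hx] using hpos

theorem stmt2_general {K : Type*} [NormedAddCommGroup K] [InnerProductSpace ℂ K] [CompleteSpace K]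
    (W : K →L[ℂ] K) (hW : W ∈ unitary (K →L[ℂ] K))
    (x y : K) (hx : ‖x‖ = 1) (hWx : W x = y)
    (P : K →L[ℂ] K) (hP : P.IsPositive) :
    Real.sqrt (1 - (⟪x, y⟫_ℂ).re ^ 2) ≤ ‖W - P‖ := by
  by_contra! hlt
  have : IsStarNormal W := isStarNormal_of_mem_unitary hW
  have : IsStarNormal P := hP.isSelfAdjoint.isStarNormal
  obtain ⟨l, hl, hlc⟩ := W.exists_mem_spectrum_re_le_re_inner hx
  rw [hWx] at hlc
  have hl_norm : ‖l‖ = 1 := by simpa using spectrum.subset_circle_of_unitary hW hl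
  have hP_spec : ∀ z ∈ spectrum ℂ P, 0 ≤ z :=
    fun z hz => spectrum_nonneg_of_nonneg (P.nonneg_iff_isPositive.mpr hP) hz
  exact spectrum.notMem_of_norm_sub_lt
    (fun z hz => Complex.sqrt_one_sub_sq_le_norm_sub hl_norm hlc (hP_spec z hz)) hlt hl

theorem stmt2 {K : Type*} [NormedAddCommGroup K] [InnerProductSpace ℂ K] [CompleteSpace K]
    (W : K →L[ℂ] K) (hW : W ∈ unitary (K →L[ℂ] K))
    (x y : K) (hx : ‖x‖ = 1) (hy : ‖y‖ = 1) (hWx : W x = y)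
    (P : K →L[ℂ] K) (hP : P.IsPositive) :
    Real.sqrt (1 - (⟪x, y⟫_ℂ).re ^ 2) ≤ ‖W - P‖ :=
  stmt2_general W hW x y hx hWx P hP
end

section
/- Let W be a unitary operator on a Hilbert space K. If some λ in the spectrum of W has Re(λ) ≤ 0, then for every positive operator P on K, ‖W - P‖ ≥ 1. -/
/-!
A normal operator has approximate eigenvectors for every point of its spectrum: if `T` is normal,
`‖T x‖ = ‖T† x‖`, so a bounded-below `T` has dense range and is invertible. Take a unit vector `u`
with `W u ≈ lam • u`. Then `⟪u, (W - P) u⟫ ≈ lam - ⟪u, P u⟫`, and `⟪u, P u⟫ ≥ 0` while `lam` lies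
on the unit circle in the closed left half-plane, so `lam` is at distance at least `1` from
`[0, ∞)`. Hence `‖W - P‖ ≥ |⟪u, (W - P) u⟫|` is at least `1 - ε` for every `ε > 0`.
-/

instance isStarNormal_algebraMap {R A : Type*} [CommSemiring R] [StarRing R] [Semiring A]
    [StarMul A] [Algebra R A] [StarModule R A] (r : R) : IsStarNormal (algebraMap R A r) :=
  ⟨by rw [← algebraMap_star_comm]; exact Algebra.commute_algebraMap_left _ _⟩

section

variable {𝕜 E : Type*} [RCLike 𝕜] [NormedAddCommGroup E] [InnerProductSpace 𝕜 E]
  [CompleteSpace E]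

theorem IsStarNormal.isUnit_of_antilipschitz {T : E →L[𝕜] E} (hT : IsStarNormal T) {c : NNReal}
    (hc : AntilipschitzWith c T) : IsUnit T := by
  rw [ContinuousLinearMap.isUnit_iff_bijective,
    ContinuousLinearMap.bijective_iff_dense_range_and_antilipschitz]
  refine ⟨?_, c, hc⟩
  rw [Submodule.topologicalClosure_eq_top_iff,
    ContinuousLinearMap.IsStarNormal.orthogonal_range hT]
  exact LinearMap.ker_eq_bot.mpr hc.injective

theorem IsStarNormal.exists_norm_eq_one_norm_apply_lt {T : E →L[𝕜] E} (hT : IsStarNormal T)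
    (hT' : ¬IsUnit T) {ε : ℝ} (hε : 0 < ε) : ∃ u : E, ‖u‖ = 1 ∧ ‖T u‖ < ε := by
  by_contra! h
  refine hT' <| hT.isUnit_of_antilipschitz (c := ε⁻¹.toNNReal) <|
    T.antilipschitz_of_bound fun x ↦ ?_
  rcases eq_or_ne x 0 with rfl | hx
  · simp
  have hx' := norm_pos_iff.mpr hx
  have hε_le := h _ (norm_smul_inv_norm (𝕜 := 𝕜) hx)
  rw [map_smul, norm_smul, norm_inv, RCLike.norm_ofReal, abs_norm, le_inv_mul_iff₀ hx'] at hε_le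
  rw [Real.coe_toNNReal _ (by positivity), inv_mul_eq_div, le_div_iff₀ hε]
  linarith

theorem IsStarNormal.exists_norm_eq_one_norm_sub_smul_lt {T : E →L[𝕜] E} (hT : IsStarNormal T)
    {l : 𝕜} (hl : l ∈ spectrum 𝕜 T) {ε : ℝ} (hε : 0 < ε) :
    ∃ u : E, ‖u‖ = 1 ∧ ‖T u - l • u‖ < ε := by
  have : IsStarNormal (algebraMap 𝕜 _ l - T) :=
    (Algebra.commute_algebraMap_left l (star T)).isStarNormal_sub
  obtain ⟨u, hu, hlt⟩ := this.exists_norm_eq_one_norm_apply_lt (spectrum.mem_iff.mp hl) hε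
  refine ⟨u, hu, ?_⟩
  simpa [Algebra.algebraMap_eq_smul_one, norm_sub_rev] using hlt

end

open scoped ComplexOrder in
theorem Complex.one_le_norm_sub_of_re_nonpos_of_nonneg {l z : ℂ} (hl : ‖l‖ = 1) (hre : l.re ≤ 0)
    (hz : 0 ≤ z) : 1 ≤ ‖l - z‖ := by
  obtain ⟨hz_re, hz_im⟩ := Complex.nonneg_iff.mp hz
  have hl' : l.re * l.re + l.im * l.im = 1 := by
    rw [← Complex.normSq_apply, Complex.normSq_eq_norm_sq, hl, one_pow]
  refine one_le_sq_iff_one_le_abs _ |>.mp ?_ |>.trans_eq (abs_norm _)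
  rw [Complex.sq_norm, Complex.normSq_apply]
  simp only [Complex.sub_re, Complex.sub_im, ← hz_im]
  nlinarith

theorem stmt3 {K : Type*} [NormedAddCommGroup K] [InnerProductSpace ℂ K] [CompleteSpace K]
    (W : K →L[ℂ] K) (hW : W ∈ unitary (K →L[ℂ] K))
    (lam : ℂ) (hlam : lam ∈ spectrum ℂ W) (hre : lam.re ≤ 0) :
    ∀ P : K →L[ℂ] K, P.IsPositive → 1 ≤ ‖W - P‖ := by
  intro P hP
  have hlam1 : ‖lam‖ = 1 := by simpa using spectrum.subset_circle_of_unitary hW hlam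
  refine le_of_forall_pos_lt_add fun ε hε ↦ ?_
  obtain ⟨u, hu, hWu⟩ :=
    (isStarNormal_of_mem_unitary hW).exists_norm_eq_one_norm_sub_smul_lt hlam hε
  have hnum (v : K) : ‖inner ℂ u v‖ ≤ ‖v‖ := by simpa [hu] using norm_inner_le_norm u v
  calc 1 ≤ ‖lam - inner ℂ u (P u)‖ :=
        Complex.one_le_norm_sub_of_re_nonpos_of_nonneg hlam1 hre (hP.inner_nonneg_right u)
    _ = ‖inner ℂ u ((W - P) u) - inner ℂ u (W u - lam • u)‖ := by
      rw [sub_apply, inner_sub_right, inner_sub_right, inner_smul_right,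
        inner_self_eq_one_of_norm_eq_one hu]
      ring_nf
    _ ≤ ‖(W - P) u‖ + ‖W u - lam • u‖ :=
        (norm_sub_le _ _).trans (add_le_add (hnum _) (hnum _))
    _ < ‖W - P‖ + ε := by
      refine add_lt_add_of_le_of_lt ?_ hWu
      simpa [hu] using (W - P).le_opNorm u
end

section
/- Let U be a unitary on a Hilbert space with U + U* ≥ 2rI for some 0 < r < 1. Then the distance from U to the scalar operators satisfies d(U, ℂI) ≤ √(1 - r²). -/
/-!
The scalar `r • 1` itself is close enough: for an isometry `U`,
`‖U x - r x‖² = (1 + r²)‖x‖² - 2r Re⟪U x, x⟫`, and the positivity hypothesis says exactly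
`Re⟪U x, x⟫ ≥ r‖x‖²`, so `‖U - r • 1‖ ≤ √(1 - r²)` once `r ≥ 0`.
-/

section

open ContinuousLinearMap

variable {𝕜 E : Type*} [RCLike 𝕜] [NormedAddCommGroup E] [InnerProductSpace 𝕜 E]

theorem mul_norm_sq_le_re_inner_of_isPositive [CompleteSpace E] {T : E →L[𝕜] E} {r : ℝ}
    (hT : (T + star T - ((2 * r : ℝ) : 𝕜) • (1 : E →L[𝕜] E)).IsPositive) (x : E) :
    r * ‖x‖ ^ 2 ≤ RCLike.re (inner 𝕜 (T x) x) := by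
  have h := hT.re_inner_nonneg_left x
  have hstar : RCLike.re (inner 𝕜 (star T x) x) = RCLike.re (inner 𝕜 (T x) x) := by
    rw [star_eq_adjoint, adjoint_inner_left, inner_re_symm]
  simp only [sub_apply, add_apply, smul_apply, one_apply_eq_self, inner_sub_left, inner_add_left,
    inner_smul_left, map_sub, map_add, hstar, RCLike.conj_ofReal, RCLike.re_ofReal_mul,
    inner_self_eq_norm_sq] at h
  linarith

theorem norm_sub_smul_sq_of_norm_eq {u x : E} (hu : ‖u‖ = ‖x‖) (r : ℝ) :
    ‖u - (r : 𝕜) • x‖ ^ 2 = (1 + r ^ 2) * ‖x‖ ^ 2 - 2 * r * RCLike.re (inner 𝕜 u x) := by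
  rw [@norm_sub_sq 𝕜, inner_smul_right, RCLike.re_ofReal_mul, norm_smul, RCLike.norm_ofReal,
    mul_pow, sq_abs, hu]
  ring

theorem norm_sub_smul_one_le_of_mem_unitary [CompleteSpace E] {U : E →L[𝕜] E}
    (hU : U ∈ unitary (E →L[𝕜] E)) {r : ℝ} (hr : 0 ≤ r) (hUr : ∀ x, r * ‖x‖ ^ 2 ≤ RCLike.re (inner 𝕜 (U x) x)) :
    ‖U - (r : 𝕜) • (1 : E →L[𝕜] E)‖ ≤ Real.sqrt (1 - r ^ 2) := by
  refine opNorm_le_bound _ (Real.sqrt_nonneg _) fun x => ?_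
  have hsq : ‖U x - (r : 𝕜) • x‖ ^ 2 ≤ (1 - r ^ 2) * ‖x‖ ^ 2 := by
    rw [norm_sub_smul_sq_of_norm_eq (U.norm_map_of_mem_unitary hU x)]
    nlinarith [hUr x]
  calc ‖(U - (r : 𝕜) • 1) x‖ = ‖U x - (r : 𝕜) • x‖ := rfl
    _ ≤ Real.sqrt ((1 - r ^ 2) * ‖x‖ ^ 2) := Real.le_sqrt_of_sq_le hsq
    _ = Real.sqrt (1 - r ^ 2) * ‖x‖ := by
      rw [Real.sqrt_mul' _ (by positivity), Real.sqrt_sq (norm_nonneg x)]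

end

theorem stmt10_general {K : Type*} [NormedAddCommGroup K] [InnerProductSpace ℂ K] [CompleteSpace K]
    (U : K →L[ℂ] K) (hU : U ∈ unitary (K →L[ℂ] K)) (r : ℝ) (hr0 : 0 < r)
    (hpos : (U + star U - ((2 * r : ℝ) : ℂ) • (1 : K →L[ℂ] K)).IsPositive) :
    Metric.infDist U (Set.range fun lam : ℂ => lam • (1 : K →L[ℂ] K))
      ≤ Real.sqrt (1 - r ^ 2) :=
  calc Metric.infDist U (Set.range fun lam : ℂ => lam • (1 : K →L[ℂ] K))
      ≤ dist U ((r : ℂ) • (1 : K →L[ℂ] K)) := Metric.infDist_le_dist_of_mem ⟨r, rfl⟩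
    _ = ‖U - (r : ℂ) • (1 : K →L[ℂ] K)‖ := dist_eq_norm _ _
    _ ≤ Real.sqrt (1 - r ^ 2) := norm_sub_smul_one_le_of_mem_unitary hU hr0.le
      (mul_norm_sq_le_re_inner_of_isPositive hpos)

theorem stmt10 {K : Type*} [NormedAddCommGroup K] [InnerProductSpace ℂ K] [CompleteSpace K]
    (U : K →L[ℂ] K) (hU : U ∈ unitary (K →L[ℂ] K)) (r : ℝ) (hr0 : 0 < r) (hr1 : r < 1)
    (hpos : (U + star U - ((2 * r : ℝ) : ℂ) • (1 : K →L[ℂ] K)).IsPositive) :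
    Metric.infDist U (Set.range fun lam : ℂ => lam • (1 : K →L[ℂ] K))
      ≤ Real.sqrt (1 - r ^ 2) :=
  stmt10_general U hU r hr0 hpos
end
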